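/- arXiv:1210.6670 — 5 statements merged into one kernel-verified Lean document; each statement's English description precedes it below -/
import Mathlib

section
/- Let E₀ be a Banach space and E₀ ⊇ E₁ ⊇ E₂ ⊇ ⋯ a nested sequence of linear subspaces, each E_k equipped with a complete norm ‖·‖_k (with ‖·‖₀ the given norm of E₀), such that for all j < k the inclusion (E_k,‖·‖_k) → (E_j,‖·‖_j) is bounded and compact. Set E_∞ := ⋂_k E_k (not assumed dense in the levels) and let Ê_k denote the closure of E_∞ in (E_k,‖·‖_k). Then: (a) Ê_k ⊆ Ê_j for all j < k, and the inclusion (Ê_k,‖·‖_k) → (Ê_j,‖·‖_j) is bounded and compact; (b) E_∞ is dense in each (Ê_k,‖·‖_k); (c) ⋂_k Ê_k = E_∞. In particular (Ê_k)_{k∈ℕ₀} with the norms ‖·‖_k is an sc-Banach space. -/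
/-!
Statement 5: repairing a non-dense scale by taking closures of the smooth points
yields an sc-Banach space.
-/

open Bornology Topology Filter

universe u

/-- The composite inclusion operator from level `j + d` down to level `j` of a scale of
Banach spaces with one-step inclusions `ι`. -/
def scInclDown (E : ℕ → Type u) [∀ k, NormedAddCommGroup (E k)] [∀ k, NormedSpace ℝ (E k)]
    (ι : ∀ k, E (k + 1) →ₗ[ℝ] E k) (j : ℕ) : (d : ℕ) → E (j + d) →ₗ[ℝ] E j
  | 0 => LinearMap.id
  | d + 1 => (scInclDown E ι j d).comp (ι (j + d))

/-- The set of "smooth points" (i.e. points of `E_∞`) of the level `E j`. -/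
def scSmoothSet (E : ℕ → Type u) [∀ k, NormedAddCommGroup (E k)] [∀ k, NormedSpace ℝ (E k)]
    (ι : ∀ k, E (k + 1) →ₗ[ℝ] E k) (j : ℕ) : Set (E j) :=
  {x | ∀ d : ℕ, ∃ y : E (j + d), scInclDown E ι j d y = x}

/-- `Ê_j`: the closure of the set of smooth points in the level `E j`. -/
def scHatSet (E : ℕ → Type u) [∀ k, NormedAddCommGroup (E k)] [∀ k, NormedSpace ℝ (E k)]
    (ι : ∀ k, E (k + 1) →ₗ[ℝ] E k) (j : ℕ) : Set (E j) :=
  closure (scSmoothSet E ι j)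

/-!
The inclusions are continuous and map smooth points to smooth points, so they map the
closures `Ê_{j+d}` into `Ê_j`; compactness is inherited from the ambient levels. A smooth
point of level `j` lifts to a smooth point of every level `j + d` because, by injectivity,
its lifts to the higher levels all lie above its unique lift to `j + d`.
-/

section ScInclDown

variable {E : ℕ → Type u} [∀ k, NormedAddCommGroup (E k)] [∀ k, NormedSpace ℝ (E k)]
  (ι : ∀ k, E (k + 1) →ₗ[ℝ] E k)

lemma continuous_scInclDown (hι : ∀ k, Continuous (ι k)) (j : ℕ) :
    ∀ d, Continuous (scInclDown E ι j d)
  | 0 => continuous_id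
  | d + 1 => (continuous_scInclDown hι j d).comp (hι (j + d))

lemma scInclDown_injective (hι : ∀ k, Function.Injective (ι k)) (j : ℕ) :
    ∀ d, Function.Injective (scInclDown E ι j d)
  | 0 => Function.injective_id
  | d + 1 => (scInclDown_injective hι j d).comp (hι (j + d))

lemma apply_cast_index {m n : ℕ} (h : m = n) (w : E (m + 1)) :
    ι n (cast (congrArg (fun k => E (k + 1)) h) w) = cast (congrArg E h) (ι m w) := by
  subst h; rfl

/-- The cast is needed because `j + d + e` and `j + (d + e)` are only propositionally equal. -/
lemma scInclDown_add_comp_cast (j d : ℕ) :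
    ∀ e, scInclDown E ι j (d + e) ∘ cast (congrArg E (Nat.add_assoc j d e)) =
      scInclDown E ι j d ∘ scInclDown E ι (j + d) e
  | 0 => rfl
  | e + 1 => funext fun w => by
    have ih := congrFun (scInclDown_add_comp_cast j d e) (ι (j + d + e) w)
    show scInclDown E ι j (d + e) (ι (j + (d + e)) (cast _ w)) = _
    rw [apply_cast_index ι (Nat.add_assoc j d e) w]
    exact ih

lemma range_scInclDown_add (j d e : ℕ) :
    Set.range (scInclDown E ι j (d + e)) =
      scInclDown E ι j d '' Set.range (scInclDown E ι (j + d) e) := by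
  rw [← Set.range_comp, ← scInclDown_add_comp_cast,
    (cast_bijective _).surjective.range_comp]

lemma antitone_range_scInclDown (j : ℕ) :
    Antitone fun d => Set.range (scInclDown E ι j d) :=
  antitone_nat_of_succ_le fun d => Set.range_comp_subset_range (ι (j + d)) (scInclDown E ι j d)

lemma scSmoothSet_eq_iInter_range (j : ℕ) :
    scSmoothSet E ι j = ⋂ d, Set.range (scInclDown E ι j d) := by
  ext x
  simp [scSmoothSet]

lemma mapsTo_scSmoothSet (j d : ℕ) :
    Set.MapsTo (scInclDown E ι j d) (scSmoothSet E ι (j + d)) (scSmoothSet E ι j) := by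
  intro x hx
  simp only [scSmoothSet_eq_iInter_range, Set.mem_iInter] at hx ⊢
  intro e
  have hx' : scInclDown E ι j d x ∈ Set.range (scInclDown E ι j (d + e)) := by
    rw [range_scInclDown_add]
    exact Set.mem_image_of_mem _ (hx e)
  exact antitone_range_scInclDown ι j (Nat.le_add_left e d) hx'

lemma exists_mem_scSmoothSet_scInclDown_eq (hι : ∀ k, Function.Injective (ι k)) (j d : ℕ)
    {x : E j} (hx : x ∈ scSmoothSet E ι j) :
    ∃ y ∈ scSmoothSet E ι (j + d), scInclDown E ι j d y = x := by
  rw [scSmoothSet_eq_iInter_range, Set.mem_iInter] at hx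
  obtain ⟨y, rfl⟩ := hx d
  refine ⟨y, ?_, rfl⟩
  rw [scSmoothSet_eq_iInter_range, Set.mem_iInter]
  intro e
  obtain ⟨z, hz, hzy⟩ := (range_scInclDown_add ι j d e).le (hx (d + e))
  rwa [← scInclDown_injective ι hι j d hzy]

lemma mapsTo_scHatSet (hι : ∀ k, Continuous (ι k)) (j d : ℕ) :
    Set.MapsTo (scInclDown E ι j d) (scHatSet E ι (j + d)) (scHatSet E ι j) :=
  (mapsTo_scSmoothSet ι j d).closure (continuous_scInclDown ι hι j d)

lemma closure_image_subset_scHatSet (hι : ∀ k, Continuous (ι k)) (j d : ℕ)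
    {S : Set (E (j + d))} (hS : S ⊆ scHatSet E ι (j + d)) :
    closure (scInclDown E ι j d '' S) ⊆ scHatSet E ι j :=
  closure_minimal ((mapsTo_scHatSet ι hι j d).mono_left hS).image_subset isClosed_closure

end ScInclDown

theorem stmt5_general (E : ℕ → Type u) [∀ k, NormedAddCommGroup (E k)] [∀ k, NormedSpace ℝ (E k)]
    (ι : ∀ k, E (k + 1) →ₗ[ℝ] E k)
    (hinj : ∀ k, Function.Injective (ι k))
    (hcomplete : ∀ k, CompleteSpace (E k))
    (hbounded : ∀ k, Continuous (ι k))
    (hcompact : ∀ j d : ℕ, 0 < d → ∀ S : Set (E (j + d)), IsBounded S →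
      IsCompact (closure (scInclDown E ι j d '' S))) :
    (∀ j d : ℕ, 0 < d →
      Set.MapsTo (scInclDown E ι j d) (scHatSet E ι (j + d)) (scHatSet E ι j) ∧
      (∃ C : ℝ, ∀ x ∈ scHatSet E ι (j + d), ‖scInclDown E ι j d x‖ ≤ C * ‖x‖) ∧
      (∀ S : Set (E (j + d)), S ⊆ scHatSet E ι (j + d) → IsBounded S →
        IsCompact (closure (scInclDown E ι j d '' S)) ∧
        closure (scInclDown E ι j d '' S) ⊆ scHatSet E ι j)) ∧
    (∀ j, ∀ x ∈ scHatSet E ι j, ∀ ε > (0:ℝ), ∃ y ∈ scSmoothSet E ι j, ‖x - y‖ < ε) ∧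
    (∀ j, {x : E j | x ∈ scHatSet E ι j ∧
        ∀ d : ℕ, ∃ y ∈ scHatSet E ι (j + d), scInclDown E ι j d y = x} = scSmoothSet E ι j) ∧
    (∀ j d : ℕ, 0 < d → ∀ p ∈ scHatSet E ι (j + d), ∃ O ∈ 𝓝 p,
      IsCompact (closure (scInclDown E ι j d '' (O ∩ scHatSet E ι (j + d)))) ∧
      closure (scInclDown E ι j d '' (O ∩ scHatSet E ι (j + d))) ⊆ scHatSet E ι j) ∧
    (∀ j, IsComplete (scHatSet E ι j)) := by
  refine ⟨fun j d hd => ⟨mapsTo_scHatSet ι hbounded j d, ?_, fun S hS hSb =>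
      ⟨hcompact j d hd S hSb, closure_image_subset_scHatSet ι hbounded j d hS⟩⟩,
    fun j x hx ε hε => ?_, fun j => ?_, fun j d hd p _ => ?_,
    fun j => have := hcomplete j; isClosed_closure.isComplete⟩
  · let L : E (j + d) →L[ℝ] E j := ⟨scInclDown E ι j d, continuous_scInclDown ι hbounded j d⟩
    exact ⟨‖L‖, fun x _ => L.le_opNorm x⟩
  · obtain ⟨y, hy, hxy⟩ := Metric.mem_closure_iff.mp hx ε hε
    exact ⟨y, hy, by rwa [← dist_eq_norm]⟩
  · ext x
    refine ⟨fun ⟨_, hlift⟩ d => ?_, fun hx => ⟨subset_closure hx, fun d => ?_⟩⟩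
    · obtain ⟨y, -, hy⟩ := hlift d
      exact ⟨y, hy⟩
    · obtain ⟨y, hy, hyx⟩ := exists_mem_scSmoothSet_scInclDown_eq ι hinj j d hx
      exact ⟨y, subset_closure hy, hyx⟩
  · exact ⟨Metric.ball p 1, Metric.ball_mem_nhds p one_pos,
      hcompact j d hd _ (Metric.isBounded_ball.subset Set.inter_subset_left),
      closure_image_subset_scHatSet ι hbounded j d Set.inter_subset_right⟩

/-- **Statement 5** (the closure lemma of Section 2.1 of the paper).
Given a nested scale of Banach spaces with injective, bounded and compact inclusions
(density of `E_∞` *not* assumed, in fact assumed to fail), the closures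
`Ê_k := cl_{E_k}(E_∞)` satisfy:
(a) the inclusions map `Ê_{j+d}` into `Ê_j`, boundedly and compactly;
(b) `E_∞` is dense in each `Ê_k`;
(c) the set of points of level `0` admitting lifts to every `Ê_k` is exactly `E_∞`;
and moreover (the "in particular (Ê_k) is an sc-Banach space" part)
(d) every point of `Ê_{j+d}` has a neighborhood mapping to a relatively compact subset
of `Ê_j`, and (e) each `Ê_j` is a complete subset. -/
theorem stmt5 (E : ℕ → Type u) [∀ k, NormedAddCommGroup (E k)] [∀ k, NormedSpace ℝ (E k)]
    (ι : ∀ k, E (k + 1) →ₗ[ℝ] E k)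
    (hinj : ∀ k, Function.Injective (ι k))
    (hcomplete : ∀ k, CompleteSpace (E k))
    (hbounded : ∀ k, Continuous (ι k))
    (hcompact : ∀ j d : ℕ, 0 < d → ∀ S : Set (E (j + d)), IsBounded S →
      IsCompact (closure (scInclDown E ι j d '' S)))
    (hnotdense : ¬ ∀ j, Dense (scSmoothSet E ι j)) :
    (∀ j d : ℕ, 0 < d →
      Set.MapsTo (scInclDown E ι j d) (scHatSet E ι (j + d)) (scHatSet E ι j) ∧
      (∃ C : ℝ, ∀ x ∈ scHatSet E ι (j + d), ‖scInclDown E ι j d x‖ ≤ C * ‖x‖) ∧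
      (∀ S : Set (E (j + d)), S ⊆ scHatSet E ι (j + d) → IsBounded S →
        IsCompact (closure (scInclDown E ι j d '' S)) ∧
        closure (scInclDown E ι j d '' S) ⊆ scHatSet E ι j)) ∧
    (∀ j, ∀ x ∈ scHatSet E ι j, ∀ ε > (0:ℝ), ∃ y ∈ scSmoothSet E ι j, ‖x - y‖ < ε) ∧
    (∀ j, {x : E j | x ∈ scHatSet E ι j ∧
        ∀ d : ℕ, ∃ y ∈ scHatSet E ι (j + d), scInclDown E ι j d y = x} = scSmoothSet E ι j) ∧
    (∀ j d : ℕ, 0 < d → ∀ p ∈ scHatSet E ι (j + d), ∃ O ∈ 𝓝 p,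
      IsCompact (closure (scInclDown E ι j d '' (O ∩ scHatSet E ι (j + d)))) ∧
      closure (scInclDown E ι j d '' (O ∩ scHatSet E ι (j + d))) ⊆ scHatSet E ι j) ∧
    (∀ j, IsComplete (scHatSet E ι j)) :=
  stmt5_general E ι hinj hcomplete hbounded hcompact
end

section
/- Chain Rule for scale calculus: Let 𝔼, 𝔽, 𝔾 be sc-Banach spaces, and let f : 𝔼 → 𝔽 and g : 𝔽 → 𝔾 be sc¹ maps. Then g ∘ f : 𝔼 → 𝔾 is sc¹, and T(g ∘ f) = Tg ∘ Tf; explicitly, for every x ∈ E₁ one has D_x(g ∘ f) = D_{f(x)}g ∘ D_x f as bounded linear operators E₀ → G₀. -/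
/-!
Statement 13 (Theorem 3.13 of the paper): the chain rule for scale calculus.

An sc-Banach space is encoded as a sequence of Banach spaces `E k` together with
injective bounded linear inclusions `ι k : E (k+1) → E k` whose composites are compact
operators and such that the set of "smooth points" is dense in every level.  A map
between sc-Banach spaces is encoded as a family of maps on the levels commuting with
the inclusions; an sc¹ map comes with differential data `Df` satisfying the
requirements of Definition 3.4 of the paper.
-/

open Bornology Topology Filter

universe u v w

/-- `(E_k)` together with the inclusions `ι` is an sc-Banach space. -/
def IsScBanach (E : ℕ → Type u) [∀ k, NormedAddCommGroup (E k)] [∀ k, NormedSpace ℝ (E k)]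
    (ι : ∀ k, E (k + 1) →ₗ[ℝ] E k) : Prop :=
  (∀ k, Function.Injective (ι k)) ∧
  (∀ k, Continuous (ι k)) ∧
  (∀ k, CompleteSpace (E k)) ∧
  (∀ j d : ℕ, 0 < d → ∀ p : E (j + d),
    ∃ O ∈ 𝓝 p, IsCompact (closure (scInclDown E ι j d '' O))) ∧
  (∀ j, Dense (scSmoothSet E ι j))

section ScMaps

variable (X : ℕ → Type u) (Y : ℕ → Type v)
  [∀ k, NormedAddCommGroup (X k)] [∀ k, NormedSpace ℝ (X k)]
  [∀ k, NormedAddCommGroup (Y k)] [∀ k, NormedSpace ℝ (Y k)]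
  (ιX : ∀ k, X (k + 1) →ₗ[ℝ] X k) (ιY : ∀ k, Y (k + 1) →ₗ[ℝ] Y k)

/-- A family of maps on the levels is compatible with the inclusions, i.e. defines a
single map `𝔼 → 𝔽` preserving the scale filtration. -/
def ScCompat (f : ∀ k, X k → Y k) : Prop :=
  ∀ (k : ℕ) (x : X (k + 1)), f k (ιX k x) = ιY k (f (k + 1) x)

/-- `f` is sc⁰: it preserves the levels and is continuous on each level. -/
def IsSc0 (f : ∀ k, X k → Y k) : Prop :=
  (∀ k, Continuous (f k)) ∧ ScCompat X Y ιX ιY f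

/-- `Df` is sc¹-differential data for `f` (Definition 3.4 / Remark 3.5 of the paper):
`f` is sc⁰; for every `x ∈ E_{k+1}` the differential `Df k x` is a bounded linear
operator `E_k → F_k`; the differentials fit together to an sc⁰ tangent map
`(x,h) ↦ D_x f (h)` on `(E_{k+1} × E_k)_k`; and at points `x ∈ E₁` the difference
quotient (measured with `‖h‖_{E₁}`) converges. -/
def IsSc1Data (f : ∀ k, X k → Y k) (Df : ∀ k, X (k + 1) → X k → Y k) : Prop :=
  IsSc0 X Y ιX ιY f ∧
  (∀ (k : ℕ) (x : X (k + 1)), IsBoundedLinearMap ℝ (Df k x)) ∧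
  (∀ k : ℕ, Continuous fun p : X (k + 1) × X k => Df k p.1 p.2) ∧
  (∀ (k : ℕ) (x : X (k + 2)) (h : X (k + 1)),
    Df k (ιX (k + 1) x) (ιX k h) = ιY k (Df (k + 1) x h)) ∧
  (∀ x : X 1, ∀ ε > (0 : ℝ), ∃ δ > (0 : ℝ), ∀ h : X 1, ‖h‖ ≤ δ →
    ‖f 0 (ιX 0 (x + h)) - f 0 (ιX 0 x) - Df 0 x (ιX 0 h)‖ ≤ ε * ‖h‖)

end ScMaps

/-!
Only the difference-quotient estimate at level `0` needs an argument; the other clauses are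
compatibility bookkeeping. Put `y = f(x)` and `k = f(x+h) - f(x) ∈ F₁`. The mean value theorem
along the segment `[y, y+k]` of `F₁` bounds `g(f(x+h)) - g(f(x)) - D_y g (D_x f h)` by the
supremum over `t ∈ [0,1)` of `‖D_{y+tk} g (k) - D_y g (D_x f h)‖`, and we split
`D_{y+tk} g (k) - D_y g (D_x f h) = D_{y+tk} g (k - D_x f h) + (D_{y+tk} g - D_y g)(D_x f h)`.
The first term is `o(‖h‖₁)` because joint continuity of `(p, w) ↦ D_p g (w)` at `(y, 0)` makes
the `D_p g` locally uniformly bounded. The second is `o(‖h‖₁)` because `h ↦ D_x f h` factors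
through the compact inclusion `E₁ → E₀`: on the image of a ball under a compact operator the
pointwise continuous family `p ↦ D_p g` converges uniformly.
-/

open Set Asymptotics

section LinearBounds

variable {E V W : Type*} [NormedAddCommGroup E] [NormedSpace ℝ E]
  [NormedAddCommGroup V] [NormedSpace ℝ V] [NormedAddCommGroup W] [NormedSpace ℝ W]

theorem LinearMap.norm_apply_le_of_ball_bound (f : E →ₗ[ℝ] V) {r c : ℝ} (hr : 0 < r)
    (h : ∀ z ∈ Metric.ball (0 : E) r, ‖f z‖ ≤ c) (z : E) : ‖f z‖ ≤ 2 * c / r * ‖z‖ := by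
  have hc : 0 ≤ c := (norm_nonneg _).trans (h 0 (Metric.mem_ball_self hr))
  refine f.bound_of_shell hr (c := (2 : ℝ)) (by norm_num) (fun w hw hwr => ?_) z
  rw [Real.norm_two] at hw
  calc ‖f w‖ ≤ c := h w (mem_ball_zero_iff.2 hwr)
    _ = 2 * c / r * (r / 2) := by field_simp
    _ ≤ 2 * c / r * ‖w‖ := by gcongr

variable {P : Type*} [TopologicalSpace P] {D : P → V →ₗ[ℝ] W}

theorem exists_eventually_norm_apply_le (hD : Continuous fun q : P × V => D q.1 q.2) (y : P) :
    ∃ M > 0, ∀ᶠ p in 𝓝 y, ∀ w, ‖D p w‖ ≤ M * ‖w‖ := by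
  have hy : ∀ᶠ q : P × V in 𝓝 (y, 0), ‖D q.1 q.2‖ < 1 :=
    (hD.norm.tendsto (y, 0)).eventually (gt_mem_nhds (by simp))
  obtain ⟨U, hU, V₀, hV₀, hUV⟩ := mem_nhds_prod_iff.1 hy
  obtain ⟨r, hr, hrV⟩ := Metric.mem_nhds_iff.1 hV₀
  refine ⟨2 / r, by positivity, Filter.mem_of_superset hU fun p hp w => ?_⟩
  simpa using (D p).norm_apply_le_of_ball_bound hr
    (fun z hz => (hUV (mk_mem_prod hp (hrV hz))).le) w

theorem IsCompact.eventually_forall_norm_apply_sub_le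
    (hD : Continuous fun q : P × V => D q.1 q.2) {K : Set V} (hK : IsCompact K) (y : P)
    {ε : ℝ} (hε : 0 < ε) : ∀ᶠ p in 𝓝 y, ∀ w ∈ K, ‖D p w - D y w‖ ≤ ε := by
  refine hK.eventually_forall_of_forall_eventually fun w _ => ?_
  have hcont : Continuous fun q : P × V => ‖D q.1 q.2 - D y q.2‖ :=
    (hD.sub (hD.comp (continuous_const.prodMk continuous_snd))).norm
  exact ((hcont.tendsto (y, w)).eventually (gt_mem_nhds (by simpa))).mono fun _ h => h.le

theorem IsCompactOperator.eventually_norm_apply_sub_le {A : E →ₗ[ℝ] V}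
    (hA : IsCompactOperator A) (hD : Continuous fun q : P × V => D q.1 q.2) (y : P)
    {ε : ℝ} (hε : 0 < ε) : ∀ᶠ p in 𝓝 y, ∀ h, ‖D p (A h) - D y (A h)‖ ≤ ε * ‖h‖ := by
  obtain ⟨K, hK, hAK⟩ := hA
  obtain ⟨ρ, hρ, hρK⟩ := Metric.mem_nhds_iff.1 hAK
  filter_upwards [hK.eventually_forall_norm_apply_sub_le hD y (by positivity : 0 < ρ * ε / 2)]
    with p hp h
  have := ((D p - D y) ∘ₗ A).norm_apply_le_of_ball_bound hρ (fun z hz => hp _ (hρK hz)) h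
  rwa [show 2 * (ρ * ε / 2) / ρ = ε by field_simp] at this

end LinearBounds

section ScDerivative

variable {E F G : Type*} [NormedAddCommGroup E] [NormedSpace ℝ E]
  [NormedAddCommGroup F] [NormedSpace ℝ F] [NormedAddCommGroup G]

def HasScFDerivAt (ι : E →ₗ[ℝ] F) (g : F → G) (L : F → G) (p : E) : Prop :=
  ∀ ε > (0 : ℝ), ∃ δ > (0 : ℝ), ∀ u : E, ‖u‖ ≤ δ →
    ‖g (ι (p + u)) - g (ι p) - L (ι u)‖ ≤ ε * ‖u‖

variable {ι : E →ₗ[ℝ] F} {g : F → G}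

theorem HasScFDerivAt.isLittleO {L : F → G} {p : E} (h : HasScFDerivAt ι g L p) :
    (fun u => g (ι (p + u)) - g (ι p) - L (ι u)) =o[𝓝 0] fun u => u := by
  refine isLittleO_iff.2 fun c hc => ?_
  obtain ⟨δ, hδ, hδ'⟩ := h c hc
  filter_upwards [Metric.closedBall_mem_nhds (0 : E) hδ] with u hu
  exact hδ' u (by simpa using hu)

variable [NormedSpace ℝ G]

theorem HasScFDerivAt.hasDerivAt_comp_line {L : F →ₗ[ℝ] G} {y k : E} {t : ℝ}
    (h : HasScFDerivAt ι g L (y + t • k)) :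
    HasDerivAt (fun s : ℝ => g (ι (y + s • k))) (L (ι k)) t := by
  rw [hasDerivAt_iff_isLittleO]
  have hline : Tendsto (fun s : ℝ => (s - t) • k) (𝓝 t) (𝓝 0) := by
    simpa using ((tendsto_id (x := 𝓝 t)).sub_const t).smul_const k
  have hbig : (fun s : ℝ => (s - t) • k) =O[𝓝 t] fun s => s - t :=
    IsBigO.of_bound ‖k‖ (Eventually.of_forall fun s => by rw [norm_smul, mul_comm])
  refine ((h.isLittleO.comp_tendsto hline).trans_isBigO hbig).congr_left fun s => ?_
  simp only [Function.comp_apply, map_smul, add_assoc, ← add_smul, add_sub_cancel]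

theorem norm_image_add_sub_sub_le_of_hasScFDerivAt {D : E → F →ₗ[ℝ] G} {y k : E} {c : G}
    {C : ℝ} (hD : ∀ t ∈ Icc (0 : ℝ) 1, HasScFDerivAt ι g (D (y + t • k)) (y + t • k))
    (bound : ∀ t ∈ Ico (0 : ℝ) 1, ‖D (y + t • k) (ι k) - c‖ ≤ C) :
    ‖g (ι (y + k)) - g (ι y) - c‖ ≤ C := by
  have hderiv : ∀ t ∈ Icc (0 : ℝ) 1, HasDerivWithinAt (fun s : ℝ => g (ι (y + s • k)) - s • c)
      (D (y + t • k) (ι k) - c) (Icc 0 1) t := fun t ht => by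
    simpa only [one_smul] using
      ((hD t ht).hasDerivAt_comp_line.fun_sub ((hasDerivAt_id' t).smul_const c)).hasDerivWithinAt
  simpa [sub_right_comm] using norm_image_sub_le_of_norm_deriv_le_segment_01' hderiv bound

end ScDerivative

theorem HasScFDerivAt.comp {E₁ E₀ F₁ F₀ G : Type*}
    [NormedAddCommGroup E₁] [NormedSpace ℝ E₁] [NormedAddCommGroup E₀] [NormedSpace ℝ E₀]
    [NormedAddCommGroup F₁] [NormedSpace ℝ F₁] [NormedAddCommGroup F₀] [NormedSpace ℝ F₀]
    [NormedAddCommGroup G] [NormedSpace ℝ G]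
    {ιE : E₁ →ₗ[ℝ] E₀} (hιE : IsCompactOperator ιE) {ιF : F₁ →ₗ[ℝ] F₀}
    {g : F₀ → G} {Dg : F₁ → F₀ →ₗ[ℝ] G} (hDg : Continuous fun q : F₁ × F₀ => Dg q.1 q.2)
    (hg : ∀ p, HasScFDerivAt ιF g (Dg p) p)
    {f₀ : E₀ → F₀} {f₁ : E₁ → F₁} (hf₀₁ : ∀ x, f₀ (ιE x) = ιF (f₁ x)) {x : E₁}
    (hf₁ : ContinuousAt f₁ x) {Df : E₀ →L[ℝ] F₀} (hf : HasScFDerivAt ιE f₀ Df x) :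
    HasScFDerivAt ιE (g ∘ f₀) (Dg (f₁ x) ∘ Df) x := by
  intro ε hε
  set y := f₁ x
  obtain ⟨M, hM, hMy⟩ := exists_eventually_norm_apply_le hDg y
  have hcompact := (hιE.continuous_comp Df.continuous).eventually_norm_apply_sub_le
    (A := Df.toLinearMap ∘ₗ ιE) hDg y (half_pos hε)
  obtain ⟨η, hη, hnear⟩ := Metric.eventually_nhds_iff.1 (hMy.and hcompact)
  obtain ⟨δ₁, hδ₁, hfδ₁⟩ := hf (ε / (2 * M)) (by positivity)
  obtain ⟨δ₂, hδ₂, hfδ₂⟩ := Metric.continuousAt_iff.1 hf₁ η hη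
  refine ⟨min δ₁ (δ₂ / 2), by positivity, fun h hh => ?_⟩
  set k := f₁ (x + h) - y
  set v := Df (ιE h)
  have hk : ‖k‖ < η := by
    simpa [dist_eq_norm] using hfδ₂ (x := x + h) (by
      simpa using (hh.trans (min_le_right _ _)).trans_lt (half_lt_self hδ₂))
  have hιk : ‖ιF k - v‖ ≤ ε / (2 * M) * ‖h‖ := by
    have := hfδ₁ h (hh.trans (min_le_left _ _))
    rwa [hf₀₁, hf₀₁, ← map_sub] at this
  have hsegment : ∀ t ∈ Ico (0 : ℝ) 1, ‖Dg (y + t • k) (ιF k) - Dg y v‖ ≤ ε * ‖h‖ := by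
    intro t ht
    have hty : dist (y + t • k) y < η := by
      rw [dist_eq_norm, add_sub_cancel_left, norm_smul, Real.norm_of_nonneg ht.1]
      exact (mul_le_of_le_one_left (norm_nonneg k) ht.2.le).trans_lt hk
    obtain ⟨hbound, hclose⟩ := hnear hty
    calc ‖Dg (y + t • k) (ιF k) - Dg y v‖
        = ‖Dg (y + t • k) (ιF k - v) + (Dg (y + t • k) v - Dg y v)‖ := by
          rw [map_sub (Dg (y + t • k)), sub_add_sub_cancel]
      _ ≤ M * (ε / (2 * M) * ‖h‖) + ε / 2 * ‖h‖ := (norm_add_le _ _).trans <|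
          add_le_add ((hbound _).trans (mul_le_mul_of_nonneg_left hιk hM.le)) (hclose h)
      _ = ε * ‖h‖ := by field_simp; ring
  have := norm_image_add_sub_sub_le_of_hasScFDerivAt (fun t _ => hg (y + t • k)) hsegment
  simp only [Function.comp_apply, hf₀₁]
  simpa only [k, add_sub_cancel] using this

theorem IsScBanach.isCompactOperator {E : ℕ → Type u} [∀ k, NormedAddCommGroup (E k)]
    [∀ k, NormedSpace ℝ (E k)] {ι : ∀ k, E (k + 1) →ₗ[ℝ] E k} (hE : IsScBanach E ι) (k : ℕ) :
    IsCompactOperator (ι k) := by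
  obtain ⟨O, hO, hOc⟩ := hE.2.2.2.1 k 1 Nat.one_pos 0
  exact (isCompactOperator_iff_exists_mem_nhds_isCompact_closure_image _).2 ⟨O, hO, hOc⟩

section Composition

variable {X : ℕ → Type u} {Y : ℕ → Type v} {Z : ℕ → Type w}
  [∀ k, NormedAddCommGroup (X k)] [∀ k, NormedSpace ℝ (X k)]
  [∀ k, NormedAddCommGroup (Y k)] [∀ k, NormedSpace ℝ (Y k)]
  [∀ k, NormedAddCommGroup (Z k)] [∀ k, NormedSpace ℝ (Z k)]
  {ιX : ∀ k, X (k + 1) →ₗ[ℝ] X k} {ιY : ∀ k, Y (k + 1) →ₗ[ℝ] Y k} {ιZ : ∀ k, Z (k + 1) →ₗ[ℝ] Z k}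
  {f : ∀ k, X k → Y k} {g : ∀ k, Y k → Z k}

theorem ScCompat.comp (hf : ScCompat X Y ιX ιY f) (hg : ScCompat Y Z ιY ιZ g) :
    ScCompat X Z ιX ιZ fun k x => g k (f k x) :=
  fun k x => (congrArg (g k) (hf k x)).trans (hg k _)

theorem IsSc0.comp (hf : IsSc0 X Y ιX ιY f) (hg : IsSc0 Y Z ιY ιZ g) :
    IsSc0 X Z ιX ιZ fun k x => g k (f k x) :=
  ⟨fun k => (hg.1 k).comp (hf.1 k), hf.2.comp hg.2⟩

end Composition

theorem stmt13_general
    (X : ℕ → Type u) (Y : ℕ → Type v) (Z : ℕ → Type w)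
    [∀ k, NormedAddCommGroup (X k)] [∀ k, NormedSpace ℝ (X k)]
    [∀ k, NormedAddCommGroup (Y k)] [∀ k, NormedSpace ℝ (Y k)]
    [∀ k, NormedAddCommGroup (Z k)] [∀ k, NormedSpace ℝ (Z k)]
    (ιX : ∀ k, X (k + 1) →ₗ[ℝ] X k) (ιY : ∀ k, Y (k + 1) →ₗ[ℝ] Y k)
    (ιZ : ∀ k, Z (k + 1) →ₗ[ℝ] Z k)
    (hX : IsScBanach X ιX)
    (f : ∀ k, X k → Y k) (g : ∀ k, Y k → Z k)
    (Df : ∀ k, X (k + 1) → X k → Y k) (Dg : ∀ k, Y (k + 1) → Y k → Z k)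
    (hf : IsSc1Data X Y ιX ιY f Df) (hg : IsSc1Data Y Z ιY ιZ g Dg) :
    IsSc1Data X Z ιX ιZ (fun k x => g k (f k x))
      (fun k x h => Dg k (f (k + 1) x) (Df k x h)) := by
  obtain ⟨hf₀, hDf_lin, hDf_cont, hDf_compat, hf_diff⟩ := hf
  obtain ⟨hg₀, hDg_lin, hDg_cont, hDg_compat, hg_diff⟩ := hg
  refine ⟨hf₀.comp hg₀, fun k x => (hDg_lin k _).comp (hDf_lin k x),
    fun k => (hDg_cont k).comp (((hf₀.1 (k + 1)).comp continuous_fst).prodMk (hDf_cont k)),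
    fun k x h => by simp only [hf₀.2 (k + 1) x, hDf_compat, hDg_compat], fun x => ?_⟩
  exact HasScFDerivAt.comp (hX.isCompactOperator 0) (Dg := fun p => (hDg_lin 0 p).toLinearMap)
    (hDg_cont 0) hg_diff (hf₀.2 0) (hf₀.1 1).continuousAt
    (Df := (hDf_lin 0 x).toContinuousLinearMap) (hf_diff x)

/-- **Statement 13** (chain rule): if `f : 𝔼 → 𝔽` and `g : 𝔽 → 𝔾` are sc¹ maps between
sc-Banach spaces, then `g ∘ f` is sc¹ with `T(g ∘ f) = Tg ∘ Tf`; explicitly,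
`D_x (g ∘ f) = D_{f(x)} g ∘ D_x f` is sc¹-differential data for `g ∘ f`. -/
theorem stmt13
    (X : ℕ → Type u) (Y : ℕ → Type v) (Z : ℕ → Type w)
    [∀ k, NormedAddCommGroup (X k)] [∀ k, NormedSpace ℝ (X k)]
    [∀ k, NormedAddCommGroup (Y k)] [∀ k, NormedSpace ℝ (Y k)]
    [∀ k, NormedAddCommGroup (Z k)] [∀ k, NormedSpace ℝ (Z k)]
    (ιX : ∀ k, X (k + 1) →ₗ[ℝ] X k) (ιY : ∀ k, Y (k + 1) →ₗ[ℝ] Y k)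
    (ιZ : ∀ k, Z (k + 1) →ₗ[ℝ] Z k)
    (hX : IsScBanach X ιX) (hY : IsScBanach Y ιY) (hZ : IsScBanach Z ιZ)
    (f : ∀ k, X k → Y k) (g : ∀ k, Y k → Z k)
    (Df : ∀ k, X (k + 1) → X k → Y k) (Dg : ∀ k, Y (k + 1) → Y k → Z k)
    (hf : IsSc1Data X Y ιX ιY f Df) (hg : IsSc1Data Y Z ιY ιZ g Dg) :
    IsSc1Data X Z ιX ιZ (fun k x => g k (f k x))
      (fun k x h => Dg k (f (k + 1) x) (Df k x h)) :=
  stmt13_general X Y Z ιX ιY ιZ hX f g Df Dg hf hg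
end

section
/- Let 𝔼 be an sc-Banach space and let r : U → U and r′ : U′ → U′ be sc-smooth retractions defined on open subsets U, U′ ⊆ E₀ with the same image O := r(U) = r′(U′). Then Tr(TU) = Tr′(TU′) as subsets of T𝔼 = E₁ × E₀; equivalently, for every p ∈ O ∩ E₁ the images of the differentials coincide: D_p r(E₀) = D_p r′(E₀) as linear subspaces of E₀. Hence the tangent TO := Tr(TU) of the sc-retract O, with fibers T_pO = D_p r(E₀), is independent of the choice of sc-smooth retraction with image O. -/
/-! Since `r'` fixes `O = r(U)`, we have `r' ∘ r = r` near `p`, and differentiating gives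
`D_p r' ∘ D_p r = D_p r`; hence `D_p r(E₀) ⊆ D_p r'(E₀)`, and equality follows by symmetry.
The chain rule behind the differentiation is not the classical one, because `r` is only
differentiable as a map `E₁ → E₀`. It is recovered from the compactness of `E₁ → E₀`: `D_p r`
maps a ball of `E₁` into a compact subset of `E₀`, on which `D_y r'` converges uniformly to
`D_p r'` as `y → p`, and the mean value theorem along the segment from `p` to `r(p + h)` turns
this into an `o(‖h‖₁)` remainder. The identity, obtained on the dense image of `E₁`, extends to
`E₀` by continuity. -/

open Bornology Topology Filter

universe u v

/-- Composite inclusion from level `k` all the way down to level `0`. -/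
def scDown0 (X : ℕ → Type u) [∀ k, NormedAddCommGroup (X k)] [∀ k, NormedSpace ℝ (X k)]
    (ιX : ∀ k, X (k + 1) →ₗ[ℝ] X k) : (k : ℕ) → X k →ₗ[ℝ] X 0
  | 0 => LinearMap.id
  | k + 1 => (scDown0 X ιX k).comp (ιX k)

section ScMapsOn

variable (X : ℕ → Type u) (Y : ℕ → Type v)
  [∀ k, NormedAddCommGroup (X k)] [∀ k, NormedSpace ℝ (X k)]
  [∀ k, NormedAddCommGroup (Y k)] [∀ k, NormedSpace ℝ (Y k)]
  (ιX : ∀ k, X (k + 1) →ₗ[ℝ] X k) (ιY : ∀ k, Y (k + 1) →ₗ[ℝ] Y k)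

/-- `f` is sc⁰ on the (relatively open) set `U ⊆ X 0`: on every level it preserves the
trace of `U` continuously. -/
def IsSc0On (U : Set (X 0)) (f : ∀ k, X k → Y k) : Prop :=
  (∀ k, ContinuousOn (f k) (scDown0 X ιX k ⁻¹' U)) ∧
  (∀ (k : ℕ) (x : X (k + 1)), scDown0 X ιX (k + 1) x ∈ U →
    f k (ιX k x) = ιY k (f (k + 1) x))

/-- `Df` is sc¹-differential data for `f` on the open set `U ⊆ X 0`: `f` is sc⁰ on `U`;
at points of `U ∩ E_{k+1}` the differential is a bounded linear map `E_k → F_k`; the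
tangent map `(x,h) ↦ D_x f (h)` is sc⁰; and at points of `U ∩ E₁` the difference
quotient (measured with the `E₁`-norm of `h`) converges. -/
def IsSc1DataOn (U : Set (X 0)) (f : ∀ k, X k → Y k)
    (Df : ∀ k, X (k + 1) → X k → Y k) : Prop :=
  IsSc0On X Y ιX ιY U f ∧
  (∀ (k : ℕ) (x : X (k + 1)), scDown0 X ιX (k + 1) x ∈ U →
    IsLinearMap ℝ (Df k x) ∧ ∃ C : ℝ, ∀ h, ‖Df k x h‖ ≤ C * ‖h‖) ∧
  (∀ k : ℕ, ContinuousOn (fun p : X (k + 1) × X k => Df k p.1 p.2)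
    {p | scDown0 X ιX (k + 1) p.1 ∈ U}) ∧
  (∀ (k : ℕ) (x : X (k + 2)) (h : X (k + 1)), scDown0 X ιX (k + 2) x ∈ U →
    Df k (ιX (k + 1) x) (ιX k h) = ιY k (Df (k + 1) x h)) ∧
  (∀ x : X 1, scDown0 X ιX 1 x ∈ U → ∀ ε > (0 : ℝ), ∃ δ > (0 : ℝ), ∀ h : X 1,
    ‖h‖ ≤ δ → scDown0 X ιX 1 (x + h) ∈ U →
    ‖f 0 (ιX 0 (x + h)) - f 0 (ιX 0 x) - Df 0 x (ιX 0 h)‖ ≤ ε * ‖h‖)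

end ScMapsOn

/-- `f` is sc^m on the open set `U`, defined recursively: sc^{m+1} means the existence
of sc¹-differential data together with the tangent map `Tf(x,h) = (f x, D_x f h)` being
sc^m on the tangent set `TU = (U ∩ E₁) × E₀ ⊆ E₁ × E₀`. -/
def IsScNOn (m : ℕ) (X : ℕ → Type u) (Y : ℕ → Type v)
    [∀ k, NormedAddCommGroup (X k)] [∀ k, NormedSpace ℝ (X k)]
    [∀ k, NormedAddCommGroup (Y k)] [∀ k, NormedSpace ℝ (Y k)]
    (ιX : ∀ k, X (k + 1) →ₗ[ℝ] X k) (ιY : ∀ k, Y (k + 1) →ₗ[ℝ] Y k)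
    (U : Set (X 0)) (f : ∀ k, X k → Y k) : Prop :=
  match m with
  | 0 => IsSc0On X Y ιX ιY U f
  | m + 1 => ∃ Df : ∀ k, X (k + 1) → X k → Y k,
      IsSc1DataOn X Y ιX ιY U f Df ∧
      IsScNOn m (fun k => X (k + 1) × X k) (fun k => Y (k + 1) × Y k)
        (fun k => (ιX (k + 1)).prodMap (ιX k)) (fun k => (ιY (k + 1)).prodMap (ιY k))
        {p : X 1 × X 0 | scDown0 X ιX 1 p.1 ∈ U}
        (fun k p => (f (k + 1) p.1, Df k p.1 p.2))

/-- An sc-smooth retraction on the sc-Banach space `(X, ιX)`: an sc^∞ map defined on an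
open subset `U` of the level `0`, mapping `U` to itself and satisfying `r ∘ r = r`. -/
def IsScRetractionOn (X : ℕ → Type u)
    [∀ k, NormedAddCommGroup (X k)] [∀ k, NormedSpace ℝ (X k)]
    (ιX : ∀ k, X (k + 1) →ₗ[ℝ] X k) (U : Set (X 0)) (r : ∀ k, X k → X k) : Prop :=
  IsOpen U ∧ Set.MapsTo (r 0) U U ∧ (∀ x ∈ U, r 0 (r 0 x) = r 0 x) ∧
  (∀ m : ℕ, IsScNOn m X X ιX ιX U r)

open Set Metric

section CompactChainRule

variable {E F₀ F₁ G : Type*} [NormedAddCommGroup E] [NormedSpace ℝ E]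
  [NormedAddCommGroup F₀] [NormedSpace ℝ F₀] [NormedAddCommGroup F₁] [NormedSpace ℝ F₁]
  [NormedAddCommGroup G] [NormedSpace ℝ G]

theorem ContinuousLinearMap.opNorm_le_div_of_forall_norm_le {f : F₀ →L[ℝ] G} {ρ c : ℝ}
    (hρ : 0 < ρ) (hc : 0 ≤ c) (hf : ∀ w, ‖w‖ ≤ ρ → ‖f w‖ ≤ c) : ‖f‖ ≤ c / ρ := by
  refine f.opNorm_le_of_unit_norm (div_nonneg hc hρ.le) fun w hw => ?_
  have h := hf (ρ • w) (by rw [norm_smul, hw, Real.norm_of_nonneg hρ.le, mul_one])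
  rw [map_smul, norm_smul, Real.norm_of_nonneg hρ.le] at h
  rwa [le_div_iff₀ hρ, mul_comm]

theorem exists_eventually_opNorm_le_of_continuousAt {X : Type*} [TopologicalSpace X]
    {T : X → F₀ →L[ℝ] G} {x : X} (hT : ContinuousAt (fun q : X × F₀ => T q.1 q.2) (x, 0)) :
    ∃ M, 0 ≤ M ∧ ∀ᶠ y in 𝓝 x, ‖T y‖ ≤ M := by
  have hsmall : ∀ᶠ q : X × F₀ in 𝓝 (x, 0), ‖T q.1 q.2‖ ≤ 1 :=
    hT.norm.eventually (ge_mem_nhds (by simp))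
  rw [nhds_prod_eq, eventually_prod_iff] at hsmall
  obtain ⟨P, hP, Q, hQ, hPQ⟩ := hsmall
  obtain ⟨ρ, hρ, hρQ⟩ := nhds_basis_closedBall.eventually_iff.1 hQ
  refine ⟨1 / ρ, by positivity, hP.mono fun y hy => ?_⟩
  exact (T y).opNorm_le_div_of_forall_norm_le hρ zero_le_one fun w hw =>
    hPQ hy (hρQ (mem_closedBall_zero_iff.2 hw))

theorem tendsto_sub_comp_of_isCompactOperator {X : Type*} [TopologicalSpace X]
    {T : X → F₀ →L[ℝ] G} {x : X} (hT : ∀ w, ContinuousAt (fun q : X × F₀ => T q.1 q.2) (x, w))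
    {A : E →L[ℝ] F₀} (hA : IsCompactOperator A) :
    Tendsto (fun y => (T y - T x).comp A) (𝓝 x) (𝓝 0) := by
  obtain ⟨K, hK, hAK⟩ := hA
  obtain ⟨ρ, hρ, hρK⟩ := nhds_basis_closedBall.mem_iff.1 hAK
  rw [Metric.tendsto_nhds]
  intro ε hε
  have hunif : ∀ᶠ y in 𝓝 x, ∀ w ∈ K, ‖T y w - T x w‖ ≤ ε * ρ / 2 := by
    refine hK.eventually_forall_of_forall_eventually fun w _ => ?_
    have hcont : ContinuousAt (fun q : X × F₀ => T q.1 q.2 - T x q.2) (x, w) :=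
      (hT w).sub ((T x).continuous.comp continuous_snd).continuousAt
    exact hcont.norm.eventually (ge_mem_nhds (by simpa using by positivity))
  filter_upwards [hunif] with y hy
  rw [dist_zero_right]
  refine ((ContinuousLinearMap.opNorm_le_div_of_forall_norm_le hρ (by positivity)
    fun v hv => hy _ (hρK (mem_closedBall_zero_iff.2 hv)))).trans_lt ?_
  rw [mul_div_assoc, mul_div_assoc, div_div_cancel_left' hρ.ne']
  linarith

theorem norm_image_add_sub_sub_le_of_hasFDerivAt_segment {g : F₁ → G} {L : F₁ → F₁ →L[ℝ] G}
    {x u : F₁} {C : ℝ} (hg : ∀ t ∈ Icc (0 : ℝ) 1, HasFDerivAt g (L (x + t • u)) (x + t • u))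
    (hC : ∀ t ∈ Icc (0 : ℝ) 1, ‖L (x + t • u) u - L x u‖ ≤ C) :
    ‖g (x + u) - g x - L x u‖ ≤ C := by
  have hderiv : ∀ t ∈ Icc (0 : ℝ) 1, HasDerivWithinAt
      (fun s : ℝ => g (x + s • u) - s • L x u) (L (x + t • u) u - L x u) (Icc 0 1) t := by
    intro t ht
    have hline : HasDerivAt (fun s : ℝ => x + s • u) u t := by
      simpa using ((hasDerivAt_id t).smul_const u).const_add x
    have hlin : HasDerivAt (fun s : ℝ => s • L x u) (L x u) t := by
      simpa using (hasDerivAt_id t).smul_const (L x u)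
    exact (((hg t ht).comp_hasDerivAt t hline).sub hlin).hasDerivWithinAt
  have := norm_image_sub_le_of_norm_deriv_le_segment_01' hderiv
    fun t ht => hC t (Ico_subset_Icc_self ht)
  simpa [sub_right_comm] using this

theorem norm_image_add_sub_sub_le_of_segment_bounds {ι : F₁ →L[ℝ] F₀} {g : F₁ → G}
    {T : F₁ → F₀ →L[ℝ] G} {x u : F₁} {w : F₀} {M a : ℝ}
    (hseg : ∀ t ∈ Icc (0 : ℝ) 1, HasFDerivAt g ((T (x + t • u)).comp ι) (x + t • u) ∧
      ‖T (x + t • u)‖ ≤ M ∧ ‖(T (x + t • u) - T x) w‖ ≤ a) :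
    ‖g (x + u) - g x - T x w‖ ≤ a + 3 * M * ‖ι u - w‖ := by
  have hTx : ‖T x‖ ≤ M := by simpa using (hseg 0 (left_mem_Icc.2 zero_le_one)).2.1
  have hM : 0 ≤ M := (norm_nonneg _).trans hTx
  have hmain : ‖g (x + u) - g x - T x (ι u)‖ ≤ a + 2 * M * ‖ι u - w‖ := by
    refine norm_image_add_sub_sub_le_of_hasFDerivAt_segment (L := fun y => (T y).comp ι)
      (fun t ht => (hseg t ht).1) fun t ht => ?_
    obtain ⟨-, hTt, hwt⟩ := hseg t ht
    have hdiff : ‖T (x + t • u) - T x‖ ≤ 2 * M := by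
      linarith [norm_sub_le (T (x + t • u)) (T x)]
    calc ‖(T (x + t • u)).comp ι u - (T x).comp ι u‖
        = ‖(T (x + t • u) - T x) w + (T (x + t • u) - T x) (ι u - w)‖ := by
          rw [← map_add, add_sub_cancel]; rfl
      _ ≤ a + 2 * M * ‖ι u - w‖ :=
          norm_add_le_of_le hwt (((T _ - T x).le_opNorm _).trans (by gcongr))
  calc ‖g (x + u) - g x - T x w‖ = ‖(g (x + u) - g x - T x (ι u)) + T x (ι u - w)‖ := by
        rw [map_sub]; abel_nf
    _ ≤ (a + 2 * M * ‖ι u - w‖) + M * ‖ι u - w‖ :=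
        norm_add_le_of_le hmain ((T x).le_opNorm _ |>.trans (by gcongr))
    _ = a + 3 * M * ‖ι u - w‖ := by ring

theorem hasFDerivAt_comp_of_isCompactOperator {ι : F₁ →L[ℝ] F₀} {φ : E → F₁}
    {A : E →L[ℝ] F₀} {p : E} (hφ : ContinuousAt φ p) (hιφ : HasFDerivAt (ι ∘ φ) A p)
    (hA : IsCompactOperator A) {g : F₁ → G} {T : F₁ → F₀ →L[ℝ] G}
    (hg : ∀ᶠ y in 𝓝 (φ p), HasFDerivAt g ((T y).comp ι) y)
    (hT : ∀ w, ContinuousAt (fun q : F₁ × F₀ => T q.1 q.2) (φ p, w)) :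
    HasFDerivAt (g ∘ φ) ((T (φ p)).comp A) p := by
  obtain ⟨M, hM, hTM⟩ := exists_eventually_opNorm_le_of_continuousAt (hT 0)
  rw [hasFDerivAt_iff_isLittleO_nhds_zero, Asymptotics.isLittleO_iff] at hιφ ⊢
  intro c hc
  set ε := c / (1 + 3 * M)
  have hε : 0 < ε := by positivity
  have hnear : ∀ᶠ y in 𝓝 (φ p), HasFDerivAt g ((T y).comp ι) y ∧ ‖T y‖ ≤ M ∧
      ‖(T y - T (φ p)).comp A‖ ≤ ε :=
    hg.and (hTM.and ((tendsto_sub_comp_of_isCompactOperator hT hA).norm.eventually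
      (ge_mem_nhds (by simpa using hε))))
  obtain ⟨δ, hδ, hball⟩ := Metric.eventually_nhds_iff_ball.1 hnear
  have hφ₀ : Tendsto (fun h => φ (p + h)) (𝓝 0) (𝓝 (φ p)) :=
    hφ.tendsto.comp ((continuous_const_add p).tendsto' 0 p (add_zero p))
  filter_upwards [hφ₀ (ball_mem_nhds _ hδ), hιφ hε] with h hu he
  have hseg : ∀ t ∈ Icc (0 : ℝ) 1, HasFDerivAt g ((T (φ p + t • (φ (p + h) - φ p))).comp ι)
      (φ p + t • (φ (p + h) - φ p)) ∧ ‖T (φ p + t • (φ (p + h) - φ p))‖ ≤ M ∧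
      ‖(T (φ p + t • (φ (p + h) - φ p)) - T (φ p)) (A h)‖ ≤ ε * ‖h‖ := fun t ht => by
    obtain ⟨hgt, hTt, hAt⟩ :=
      hball _ ((convex_ball _ _).add_smul_sub_mem (mem_ball_self hδ) hu ht)
    exact ⟨hgt, hTt, ((T _ - T (φ p)).comp A |>.le_opNorm h).trans (by gcongr)⟩
  have hest := norm_image_add_sub_sub_le_of_segment_bounds hseg
  rw [add_sub_cancel, map_sub] at hest
  calc ‖(g ∘ φ) (p + h) - (g ∘ φ) p - ((T (φ p)).comp A) h‖
      ≤ ε * ‖h‖ + 3 * M * (ε * ‖h‖) := hest.trans (by gcongr; exact he)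
    _ = c * ‖h‖ := by simp only [ε]; field_simp

end CompactChainRule

section BoundedLinear

variable {E F : Type*} [NormedAddCommGroup E] [NormedSpace ℝ E]
  [NormedAddCommGroup F] [NormedSpace ℝ F]

/-- Turns the differentials `Df 0 x`, which are bounded linear only for `x` in the domain, into a
total family of operators. -/
noncomputable def clmOfBounded (f : E → F) : E →L[ℝ] F :=
  open Classical in
  if h : IsLinearMap ℝ f ∧ ∃ C, ∀ x, ‖f x‖ ≤ C * ‖x‖ then
    (IsLinearMap.mk' f h.1).mkContinuousOfExistsBound h.2
  else 0

theorem coe_clmOfBounded {f : E → F} (hlin : IsLinearMap ℝ f)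
    (hbd : ∃ C, ∀ x, ‖f x‖ ≤ C * ‖x‖) : ⇑(clmOfBounded f) = f := by
  rw [clmOfBounded, dif_pos ⟨hlin, hbd⟩]
  rfl

end BoundedLinear

section ScCalculus

variable {X : ℕ → Type u} {Y : ℕ → Type v}
  [∀ k, NormedAddCommGroup (X k)] [∀ k, NormedSpace ℝ (X k)]
  [∀ k, NormedAddCommGroup (Y k)] [∀ k, NormedSpace ℝ (Y k)]
  {ιX : ∀ k, X (k + 1) →ₗ[ℝ] X k} {ιY : ∀ k, Y (k + 1) →ₗ[ℝ] Y k}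

theorem IsScBanach.isCompactOperator_s7 (hsc : IsScBanach X ιX) : IsCompactOperator (ιX 0) := by
  obtain ⟨O, hO, hOc⟩ := hsc.2.2.2.1 0 1 one_pos 0
  exact (isCompactOperator_iff_exists_mem_nhds_isCompact_closure_image _).2 ⟨O, hO, hOc⟩

theorem IsScBanach.denseRange (hsc : IsScBanach X ιX) : DenseRange (ιX 0) := by
  refine (hsc.2.2.2.2 0).mono fun x hx => ?_
  obtain ⟨y, hy⟩ := hx 1
  exact ⟨y, hy⟩

namespace IsSc1DataOn

variable {U : Set (X 0)} {f : ∀ k, X k → Y k} {Df : ∀ k, X (k + 1) → X k → Y k}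

theorem coe_clmOfBounded (hD : IsSc1DataOn X Y ιX ιY U f Df) {x : X 1} (hx : ιX 0 x ∈ U) :
    ⇑(clmOfBounded (Df 0 x)) = Df 0 x :=
  _root_.coe_clmOfBounded (hD.2.1 0 x hx).1 (hD.2.1 0 x hx).2

theorem hasFDerivAt (hD : IsSc1DataOn X Y ιX ιY U f Df) (hU : IsOpen U)
    {ι : X 1 →L[ℝ] X 0} (hι : ⇑ι = ⇑(ιX 0)) {x : X 1} (hx : ιX 0 x ∈ U) :
    HasFDerivAt (fun y => f 0 (ι y)) ((clmOfBounded (Df 0 x)).comp ι) x := by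
  rw [hasFDerivAt_iff_isLittleO_nhds_zero, Asymptotics.isLittleO_iff]
  intro ε hε
  obtain ⟨δ, hδ, hquot⟩ := hD.2.2.2.2 x hx ε hε
  have hU₀ : ∀ᶠ h in 𝓝 (0 : X 1), ιX 0 (x + h) ∈ U := by
    rw [← hι]
    exact ((continuous_const_add x).tendsto' 0 x (add_zero x)).eventually
      ((hU.preimage ι.continuous).mem_nhds (by rwa [hι]))
  filter_upwards [closedBall_mem_nhds 0 hδ, hU₀] with h hh hhU
  simpa [hι, hD.coe_clmOfBounded hx] using hquot h (mem_closedBall_zero_iff.1 hh) hhU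

theorem continuousAt_clmOfBounded (hD : IsSc1DataOn X Y ιX ιY U f Df) (hU : IsOpen U)
    (hι : Continuous (ιX 0)) {x : X 1} (hx : ιX 0 x ∈ U) (w : X 0) :
    ContinuousAt (fun q : X 1 × X 0 => clmOfBounded (Df 0 q.1) q.2) (x, w) := by
  have hV : IsOpen {q : X 1 × X 0 | ιX 0 q.1 ∈ U} := hU.preimage (hι.comp continuous_fst)
  refine ((hD.2.2.1 0).continuousAt (hV.mem_nhds hx)).congr
    (eventually_of_mem (hV.mem_nhds hx) fun q hq => ?_)
  simp only [hD.coe_clmOfBounded hq]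

end IsSc1DataOn

namespace IsScRetractionOn

variable {U : Set (X 0)} {r : ∀ k, X k → X k}

theorem mem_of_mem_image (hr : IsScRetractionOn X ιX U r) {y : X 0} (hy : y ∈ r 0 '' U) :
    y ∈ U := by
  obtain ⟨x, hx, rfl⟩ := hy
  exact hr.2.1 hx

theorem apply_eq_self_of_mem_image (hr : IsScRetractionOn X ιX U r) {y : X 0}
    (hy : y ∈ r 0 '' U) : r 0 y = y := by
  obtain ⟨x, hx, rfl⟩ := hy
  exact hr.2.2.1 x hx

theorem differential_comp_differential_eq_of_image_eq (hsc : IsScBanach X ιX)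
    {U' : Set (X 0)} {r' : ∀ k, X k → X k}
    (hr : IsScRetractionOn X ιX U r) (hr' : IsScRetractionOn X ιX U' r')
    (him : r 0 '' U = r' 0 '' U') {Df Df' : ∀ k, X (k + 1) → X k → X k}
    (hDf : IsSc1DataOn X X ιX ιX U r Df) (hDf' : IsSc1DataOn X X ιX ιX U' r' Df')
    {p : X 1} (hp : ιX 0 p ∈ r 0 '' U) (v : X 0) : Df' 0 p (Df 0 p v) = Df 0 p v := by
  let ι : X 1 →L[ℝ] X 0 := ⟨ιX 0, hsc.2.1 0⟩
  set B := clmOfBounded (Df 0 p)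
  have hpU := hr.mem_of_mem_image hp
  have hpU' := hr'.mem_of_mem_image (him ▸ hp)
  have hU₁ : ι ⁻¹' U ∈ 𝓝 p := (hr.1.preimage ι.continuous).mem_nhds hpU
  have hr₁ : ∀ x ∈ ι ⁻¹' U, ι (r 1 x) = r 0 (ι x) := fun x hx => (hDf.1.2 0 x hx).symm
  have hrp : r 1 p = p := hsc.1 0 ((hr₁ p hpU).trans (hr.apply_eq_self_of_mem_image hp))
  have hfix : ∀ x ∈ ι ⁻¹' U, ι (r 1 x) = r' 0 (ι (r 1 x)) := fun x hx => by
    rw [hr₁ x hx]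
    exact (hr'.apply_eq_self_of_mem_image (him ▸ mem_image_of_mem _ hx)).symm
  have hιr : HasFDerivAt (ι ∘ r 1) (B.comp ι) p :=
    (hDf.hasFDerivAt hr.1 rfl hpU).congr_of_eventuallyEq (eventually_of_mem hU₁ hr₁)
  have hg : ∀ᶠ y in 𝓝 (r 1 p), HasFDerivAt (fun y => r' 0 (ι y))
      ((clmOfBounded (Df' 0 y)).comp ι) y := by
    rw [hrp]
    exact eventually_of_mem ((hr'.1.preimage ι.continuous).mem_nhds hpU')
      fun y hy => hDf'.hasFDerivAt hr'.1 rfl hy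
  have hT : ∀ w, ContinuousAt (fun q : X 1 × X 0 => clmOfBounded (Df' 0 q.1) q.2) (r 1 p, w) := by
    rw [hrp]
    exact hDf'.continuousAt_clmOfBounded hr'.1 ι.continuous hpU'
  have hcomp := ((hasFDerivAt_comp_of_isCompactOperator (hDf.1.1 1 |>.continuousAt hU₁) hιr
    (hsc.isCompactOperator_s7.clm_comp B) hg hT).congr_of_eventuallyEq
    (eventually_of_mem hU₁ hfix)).unique hιr
  rw [hrp] at hcomp
  have hTB : (clmOfBounded (Df' 0 p)).comp B = B :=
    DFunLike.coe_injective (hsc.denseRange.equalizer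
      ((clmOfBounded (Df' 0 p)).comp B).continuous B.continuous
      (congrArg DFunLike.coe hcomp))
  simpa [B, hDf.coe_clmOfBounded hpU, hDf'.coe_clmOfBounded hpU'] using
    DFunLike.congr_fun hTB v

end IsScRetractionOn

end ScCalculus

/-- **Statement 14** (Lemma 4.13 (i) of the paper): two sc-smooth retractions with the
same image `O` have the same tangent: at every smooth-enough point `p ∈ O ∩ E₁` the
images of the level-0 differentials of the two retractions coincide, so the tangent
`T_p O = D_p r (E₀)` of the sc-retract is well defined. -/
theorem stmt14 (X : ℕ → Type u)
    [∀ k, NormedAddCommGroup (X k)] [∀ k, NormedSpace ℝ (X k)]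
    (ιX : ∀ k, X (k + 1) →ₗ[ℝ] X k) (hsc : IsScBanach X ιX)
    (U U' : Set (X 0)) (r r' : ∀ k, X k → X k)
    (hr : IsScRetractionOn X ιX U r) (hr' : IsScRetractionOn X ιX U' r')
    (him : r 0 '' U = r' 0 '' U')
    (Df Df' : ∀ k, X (k + 1) → X k → X k)
    (hDf : IsSc1DataOn X X ιX ιX U r Df) (hDf' : IsSc1DataOn X X ιX ιX U' r' Df')
    (p : X 1) (hp : scDown0 X ιX 1 p ∈ r 0 '' U) :
    Set.range (Df 0 p) = Set.range (Df' 0 p) := by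
  have hp' : scDown0 X ιX 1 p ∈ r' 0 '' U' := him ▸ hp
  refine Set.Subset.antisymm ?_ ?_
  · rintro _ ⟨v, rfl⟩
    exact ⟨Df 0 p v, hr.differential_comp_differential_eq_of_image_eq hsc hr' him hDf hDf' hp v⟩
  · rintro _ ⟨v, rfl⟩
    exact ⟨Df' 0 p v,
      hr'.differential_comp_differential_eq_of_image_eq hsc hr him.symm hDf' hDf hp' v⟩
end

section
/- Let β : ℝ → ℝ be a fixed smooth, compactly supported function with ‖β‖_{L²(ℝ)} = 1, and for t > 0 set β_t := β(e^{1/t} + ·) ∈ L²(ℝ). Then the map π : ℝ × L²(ℝ) → L²(ℝ) defined by π(t,f) := ⟨f, β_t⟩_{L²} · β_t for t > 0 and π(t,f) := 0 for t ≤ 0 is jointly continuous (including at all points (0,f)). Moreover, for every t ∈ ℝ the map f ↦ π(t,f) is a continuous linear projection (π(t, π(t,f)) = π(t,f) for all f) of operator norm at most 1. -/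
/-!
For `t > 0` the vector `β_t` is a translate of `β`, hence a unit vector, so `π(t, ·)` is the
orthogonal projection onto `ℝ β_t`; for `t ≤ 0` it is the projection onto `0`. Translation is
continuous on `L²(ℝ)`, which gives continuity of `π` where `t > 0`. At `t = 0` the point is that
`β_t → 0` weakly: if `β` vanishes on `(r, ∞)`, then `⟨f, β_t⟩` only sees `f` on
`(-∞, r - e^{1/t}]`, so by Cauchy–Schwarz it is bounded by the `L²` mass of that tail of `f`.
Hence `‖π(t, f)‖ ≤ |⟨f₀, β_t⟩| + ‖f - f₀‖ → 0` as `(t, f) → (0, f₀)`.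
-/

open MeasureTheory Real

/-- The translate `s ↦ β (c + s)` of `β` as an element of `L²(ℝ)` (defined to be `0`
in the irrelevant case where the translate is not square integrable). -/
noncomputable def translateL2 (β : ℝ → ℝ) (c : ℝ) : Lp ℝ 2 (volume : Measure ℝ) :=
  letI := Classical.dec (MeasureTheory.MemLp (fun s => β (c + s)) 2 (volume : Measure ℝ))
  if h : MeasureTheory.MemLp (fun s => β (c + s)) 2 (volume : Measure ℝ) then h.toLp _ else 0

/-- `β_t := β(e^{1/t} + ·) ∈ L²(ℝ)` for `t > 0`. -/
noncomputable def betaT (β : ℝ → ℝ) (t : ℝ) : Lp ℝ 2 (volume : Measure ℝ) :=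
  translateL2 β (Real.exp (1 / t))

/-- The splicing projections `π(t, f)`. -/
noncomputable def spliceProj (β : ℝ → ℝ) (t : ℝ) (f : Lp ℝ 2 (volume : Measure ℝ)) :
    Lp ℝ 2 (volume : Measure ℝ) :=
  if 0 < t then (inner ℝ f (betaT β t) : ℝ) • betaT β t else 0

open Filter Set Topology
open scoped RealInnerProductSpace

section SquareIntegrable

variable {α : Type*} [MeasurableSpace α] {μ : Measure α} {f g : α → ℝ}

theorem MeasureTheory.MemLp.inner_toLp_two (hf : MemLp f 2 μ) (hg : MemLp g 2 μ) :
    ⟪hf.toLp f, hg.toLp g⟫ = ∫ x, f x * g x ∂μ := by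
  rw [L2.inner_def]
  refine integral_congr_ae ?_
  filter_upwards [hf.coeFn_toLp, hg.coeFn_toLp] with x hfx hgx
  simp [hfx, hgx, mul_comm]

theorem MeasureTheory.MemLp.norm_toLp_two (hf : MemLp f 2 μ) :
    ‖hf.toLp f‖ = √(∫ x, f x ^ 2 ∂μ) := by
  simp_rw [sq, ← hf.inner_toLp_two hf, real_inner_self_eq_norm_mul_norm, ← sq]
  exact (sqrt_sq (norm_nonneg _)).symm

theorem abs_integral_mul_le_sqrt_mul_sqrt (hf : MemLp f 2 μ) (hg : MemLp g 2 μ) :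
    |∫ x, f x * g x ∂μ| ≤ √(∫ x, f x ^ 2 ∂μ) * √(∫ x, g x ^ 2 ∂μ) := by
  rw [← hf.inner_toLp_two hg, ← hf.norm_toLp_two, ← hg.norm_toLp_two]
  exact abs_real_inner_le_norm _ _

end SquareIntegrable

section Translate

variable {β : ℝ → ℝ}

theorem translateL2_eq_compMeasurePreserving (hβ : MemLp β 2 volume) (c : ℝ) :
    translateL2 β c =
      Lp.compMeasurePreserving (c + ·) (measurePreserving_add_left volume c) (hβ.toLp β) := by
  have h : MemLp (fun s => β (c + s)) 2 volume :=
    hβ.comp_measurePreserving (measurePreserving_add_left volume c)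
  rw [translateL2, dif_pos h]
  rfl

theorem continuous_translateL2 (hβ : MemLp β 2 volume) : Continuous (translateL2 β) := by
  let shift : C(ℝ, C(ℝ, ℝ)) := ContinuousMap.curry ⟨fun p : ℝ × ℝ => p.1 + p.2, continuous_add⟩
  simp_rw [funext (translateL2_eq_compMeasurePreserving hβ)]
  exact Continuous.compMeasurePreservingLp (g := shift) continuous_const shift.continuous
    (fun c => measurePreserving_add_left volume c) ENNReal.ofNat_ne_top

theorem norm_translateL2 (hβ : MemLp β 2 volume) (c : ℝ) :
    ‖translateL2 β c‖ = √(∫ s, β s ^ 2) := by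
  rw [translateL2_eq_compMeasurePreserving hβ, Lp.norm_compMeasurePreserving, hβ.norm_toLp_two]

theorem inner_translateL2 (hβ : MemLp β 2 volume) (c : ℝ) (f : Lp ℝ 2 (volume : Measure ℝ)) :
    ⟪f, translateL2 β c⟫ = ∫ s, f s * β (c + s) := by
  rw [translateL2_eq_compMeasurePreserving hβ, Lp.toLp_compMeasurePreserving]
  conv_lhs => rw [← Lp.toLp_coeFn f (Lp.memLp f)]
  exact MemLp.inner_toLp_two _ _

theorem abs_inner_translateL2_le (hβ : MemLp β 2 volume) {r : ℝ} (hr : ∀ s, r < s → β s = 0)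
    (c : ℝ) (f : Lp ℝ 2 (volume : Measure ℝ)) :
    |⟪f, translateL2 β c⟫| ≤ √(∫ s in Iic (r - c), f s ^ 2) * √(∫ s, β s ^ 2) := by
  have hshift : MemLp (fun s => β (c + s)) 2 volume :=
    hβ.comp_measurePreserving (measurePreserving_add_left volume c)
  have hvanish : ∀ s ∉ Iic (r - c), f s * β (c + s) = 0 := fun s hs => by
    rw [hr _ (by rw [mem_Iic, not_le] at hs; linarith), mul_zero]
  rw [inner_translateL2 hβ, ← setIntegral_eq_integral_of_forall_compl_eq_zero hvanish]
  calc _ ≤ √(∫ s in Iic (r - c), f s ^ 2) * √(∫ s in Iic (r - c), β (c + s) ^ 2) :=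
        abs_integral_mul_le_sqrt_mul_sqrt ((Lp.memLp f).restrict _) (hshift.restrict _)
    _ ≤ √(∫ s in Iic (r - c), f s ^ 2) * √(∫ s, β (c + s) ^ 2) := by
        gcongr ?_ * √?_
        exact setIntegral_le_integral hshift.integrable_sq (.of_forall fun _ => sq_nonneg _)
    _ = _ := by rw [integral_add_left_eq_self (fun s => β s ^ 2) c]

theorem tendsto_inner_translateL2_atTop (hβ : MemLp β 2 volume)
    (hsupp : BddAbove (Function.support β)) (f : Lp ℝ 2 (volume : Measure ℝ)) :
    Tendsto (fun c => ⟪f, translateL2 β c⟫) atTop (𝓝 0) := by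
  obtain ⟨r, hr⟩ := hsupp
  have hvanish (s : ℝ) (hs : r < s) : β s = 0 :=
    Function.notMem_support.mp fun h => (hr h).not_gt hs
  have hshift : Tendsto (fun c : ℝ => r - c) atTop atBot :=
    tendsto_atTop_atBot.2 fun b => ⟨r - b, fun c hc => by linarith⟩
  have htail := (tendsto_integral_Iic_zero (f := fun s => f s ^ 2) (μ := volume)
    hshift).sqrt.mul_const √(∫ s, β s ^ 2)
  rw [sqrt_zero, zero_mul] at htail
  exact squeeze_zero_norm (fun c => abs_inner_translateL2_le hβ hvanish c f) htail

end Translate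

theorem tendsto_exp_one_div_nhdsGT_zero : Tendsto (fun t : ℝ => exp (1 / t)) (𝓝[>] 0) atTop := by
  simp_rw [one_div]
  exact tendsto_exp_atTop.comp tendsto_inv_nhdsGT_zero

section CutOff

variable {E : Type*} [NormedAddCommGroup E] [InnerProductSpace ℝ E] {u : ℝ → E}

theorem norm_inner_smul_le_of_norm_le_one {v : E} (hv : ‖v‖ ≤ 1) (f f₀ : E) :
    ‖⟪f, v⟫ • v‖ ≤ |⟪f₀, v⟫| + ‖f - f₀‖ := by
  have hdiff : |⟪f - f₀, v⟫| ≤ ‖f - f₀‖ :=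
    (abs_real_inner_le_norm _ _).trans (mul_le_of_le_one_right (norm_nonneg _) hv)
  calc ‖⟪f, v⟫ • v‖ = |⟪f, v⟫| * ‖v‖ := by rw [norm_smul, norm_eq_abs]
    _ ≤ |⟪f, v⟫| := mul_le_of_le_one_right (abs_nonneg _) hv
    _ = |⟪f₀, v⟫ + ⟪f - f₀, v⟫| := by rw [← inner_add_left, add_sub_cancel]
    _ ≤ |⟪f₀, v⟫| + ‖f - f₀‖ := (abs_add_le _ _).trans (by gcongr)

theorem tendsto_ite_inner_smul_nhds_zero (hu : ∀ t, ‖u t‖ ≤ 1) {f₀ : E}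
    (hweak : Tendsto (fun t => ⟪f₀, u t⟫) (𝓝[>] 0) (𝓝 0)) :
    Tendsto (fun p : ℝ × E => if 0 < p.1 then ⟪p.2, u p.1⟫ • u p.1 else 0) (𝓝 (0, f₀))
      (𝓝 0) := by
  rw [nhds_prod_eq, ← nhdsLE_sup_nhdsGT, sup_prod]
  refine .sup (tendsto_const_nhds.congr' ?_) ?_
  · filter_upwards [prod_mem_prod self_mem_nhdsWithin univ_mem] with p hp
    rw [if_neg (not_lt.2 hp.1)]
  · have hbound : Tendsto (fun p : ℝ × E => |⟪f₀, u p.1⟫| + ‖p.2 - f₀‖) (𝓝[>] 0 ×ˢ 𝓝 f₀)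
        (𝓝 0) := by
      simpa using (hweak.abs.comp tendsto_fst).add
        (tendsto_iff_norm_sub_tendsto_zero.1 (tendsto_snd (f := 𝓝[>] (0 : ℝ))))
    refine squeeze_zero_norm' ?_ hbound
    filter_upwards [prod_mem_prod self_mem_nhdsWithin univ_mem] with p hp
    rw [if_pos (show 0 < p.1 from hp.1)]
    exact norm_inner_smul_le_of_norm_le_one (hu p.1) p.2 f₀

theorem continuous_ite_inner_smul (hu : ∀ t, ‖u t‖ ≤ 1) (hcont : ContinuousOn u (Ioi 0))
    (hweak : ∀ f, Tendsto (fun t => ⟪f, u t⟫) (𝓝[>] 0) (𝓝 0)) :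
    Continuous fun p : ℝ × E => if 0 < p.1 then ⟪p.2, u p.1⟫ • u p.1 else 0 := by
  refine continuous_iff_continuousAt.2 fun ⟨t₀, f₀⟩ => ?_
  rcases lt_trichotomy t₀ 0 with ht | rfl | ht
  · refine (continuousAt_const (y := (0 : E))).congr ?_
    filter_upwards [continuousAt_fst.eventually (gt_mem_nhds ht)] with p hp
    rw [if_neg (not_lt.2 hp.le)]
  · simpa only [ContinuousAt, lt_irrefl, if_false] using
      tendsto_ite_inner_smul_nhds_zero hu (hweak f₀)
  · have hu' : ContinuousAt (fun p : ℝ × E => u p.1) (t₀, f₀) :=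
      (hcont.continuousAt (Ioi_mem_nhds ht)).comp continuousAt_fst
    refine ((continuousAt_snd.inner (𝕜 := ℝ) hu').smul hu').congr ?_
    filter_upwards [continuousAt_fst.eventually (lt_mem_nhds ht)] with p hp
    rw [if_pos hp]
    rfl

end CutOff

theorem exists_spliceProj_eq_starProjection {β : ℝ → ℝ} {t : ℝ} (hunit : ‖betaT β t‖ = 1) :
    ∃ (K : Submodule ℝ (Lp ℝ 2 (volume : Measure ℝ))) (_ : K.HasOrthogonalProjection),
      spliceProj β t = K.starProjection := by
  by_cases ht : 0 < t
  · refine ⟨ℝ ∙ betaT β t, inferInstance, funext fun f => ?_⟩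
    rw [Submodule.starProjection_unit_singleton ℝ hunit, real_inner_comm, spliceProj, if_pos ht]
  · refine ⟨⊥, inferInstance, funext fun f => ?_⟩
    rw [Submodule.starProjection_bot, spliceProj, if_neg ht]
    rfl

/-- **Statement 16**: if `β` is smooth with compact support and `‖β‖_{L²} = 1`, then
`π : ℝ × L²(ℝ) → L²(ℝ)` is jointly continuous (including at `t = 0`), and for every
`t` the map `f ↦ π(t,f)` is a continuous linear projection of operator norm at most 1. -/
theorem stmt16 (β : ℝ → ℝ) (hβsmooth : ContDiff ℝ (⊤ : ℕ∞) β)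
    (hβsupp : HasCompactSupport β)
    (hβnorm : ∫ s, β s ^ 2 = 1) :
    Continuous (fun p : ℝ × Lp ℝ 2 (volume : Measure ℝ) => spliceProj β p.1 p.2) ∧
    (∀ t : ℝ, IsLinearMap ℝ (spliceProj β t)) ∧
    (∀ (t : ℝ) (f : Lp ℝ 2 (volume : Measure ℝ)),
      spliceProj β t (spliceProj β t f) = spliceProj β t f) ∧
    (∀ (t : ℝ) (f : Lp ℝ 2 (volume : Measure ℝ)), ‖spliceProj β t f‖ ≤ ‖f‖) := by
  have hL2 : MemLp β 2 volume := hβsmooth.continuous.memLp_of_hasCompactSupport hβsupp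
  have hunit (t : ℝ) : ‖betaT β t‖ = 1 := by rw [betaT, norm_translateL2 hL2, hβnorm, sqrt_one]
  have hcont : ContinuousOn (betaT β) (Ioi 0) := (continuous_translateL2 hL2).comp_continuousOn
    (continuousOn_const.div continuousOn_id fun _ ht => ne_of_gt ht).rexp
  have hweak (f : Lp ℝ 2 (volume : Measure ℝ)) :
      Tendsto (fun t => ⟪f, betaT β t⟫) (𝓝[>] 0) (𝓝 0) :=
    (tendsto_inner_translateL2_atTop hL2 (hβsupp.isCompact.bddAbove.mono (subset_tsupport β))
      f).comp tendsto_exp_one_div_nhdsGT_zero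
  refine ⟨continuous_ite_inner_smul (fun t => (hunit t).le) hcont hweak, fun t => ?_,
    fun t f => ?_, fun t f => ?_⟩ <;>
  obtain ⟨K, _, hK⟩ := exists_spliceProj_eq_starProjection (hunit t) <;> rw [hK]
  · exact K.starProjection.toLinearMap.isLinear
  · exact Submodule.starProjection_eq_self_iff.2 (K.starProjection_apply_mem f)
  · exact K.norm_starProjection_apply_le f
end

section
/- Let E₀ and F₀ be Banach spaces, and let E₁ ⊆ E₀ and F₁ ⊆ F₀ be linear subspaces each equipped with a complete norm making the inclusions E₁ → E₀ and F₁ → F₀ bounded, with F₁ dense in F₀. Let L : E₀ → F₀ be a bounded linear Fredholm operator (finite-dimensional kernel and finite-dimensional cokernel F₀/L(E₀)) such that L(E₁) ⊆ F₁, the restriction L₁ := L|_{E₁} : E₁ → F₁ is bounded, and L is regularizing: whenever x ∈ E₀ and Lx ∈ F₁ then x ∈ E₁. Then L₁ : E₁ → F₁ is a Fredholm operator with ker L₁ = ker L (in particular ker L ⊆ E₁), dim(F₁/L₁(E₁)) = dim(F₀/L(E₀)), and hence ind L₁ = ind L. -/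
/-!
A finite-codimensional range is closed (open mapping theorem applied to `(x, m) ↦ L x + m` on
`E₀ × M` with `M` a finite-dimensional complement), so `range L + F₁` is a closed dense subspace
of `F₀`, i.e. all of `F₀`. Hence `y ↦ [y]` maps `F₁` onto `F₀ ⧸ range L`, and regularity
identifies its kernel with `range L₁`; regularity likewise puts `ker L` inside `E₁`.
-/

open Function

theorem ContinuousLinearMap.isClosed_range_of_finiteDimensional_quotient
    {𝕜 E F : Type*} [NontriviallyNormedField 𝕜] [CompleteSpace 𝕜]
    [NormedAddCommGroup E] [NormedSpace 𝕜 E] [CompleteSpace E]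
    [NormedAddCommGroup F] [NormedSpace 𝕜 F] [CompleteSpace F]
    (L : E →L[𝕜] F) [FiniteDimensional 𝕜 (F ⧸ LinearMap.range (L : E →ₗ[𝕜] F))] :
    IsClosed (LinearMap.range (L : E →ₗ[𝕜] F) : Set F) := by
  obtain ⟨M, hM⟩ := (LinearMap.range (L : E →ₗ[𝕜] F)).exists_isCompl
  have : FiniteDimensional 𝕜 M := (Submodule.quotientEquivOfIsCompl _ _ hM).finiteDimensional
  have : CompleteSpace M := FiniteDimensional.complete 𝕜 M
  -- `(x, m) ↦ L x + m` is onto, hence strict with closed range, and it agrees with `L ∘ fst` on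
  -- the finite-codimensional `E × 0`; strictness and closed range survive such a change.
  let T : E × M →L[𝕜] F := L.coprod M.subtypeL
  have hT : Surjective T := by
    intro f
    obtain ⟨_, ⟨x, rfl⟩, m, hm, hxm⟩ :=
      Submodule.mem_sup.mp (hM.sup_eq_top ▸ Submodule.mem_top (x := f))
    exact ⟨(x, ⟨m, hm⟩), hxm⟩
  have : (LinearMap.ker (LinearMap.snd 𝕜 E M)).CoFG :=
    ((LinearMap.snd 𝕜 E M).quotKerEquivOfSurjective LinearMap.snd_surjective).symm.finiteDimensional
  have hfst := (T.isStrictMap_isClosed_range_iff_of_eqOn (L.comp (ContinuousLinearMap.fst 𝕜 E M))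
    (LinearMap.ker (LinearMap.snd 𝕜 E M)) (fun p (hp : p.2 = 0) => by simp [T, hp])).mp
    ⟨(T.isOpenMap hT).isStrictMap T.continuous, by simp [LinearMap.range_eq_top.mpr hT]⟩
  simpa only [ContinuousLinearMap.toLinearMap_comp, ContinuousLinearMap.coe_fst,
    LinearMap.range_comp_of_range_eq_top _ Submodule.range_fst] using hfst.2

theorem Submodule.sup_range_eq_top_of_denseRange
    {𝕜 F F1 : Type*} [NontriviallyNormedField 𝕜] [CompleteSpace 𝕜]
    [NormedAddCommGroup F] [NormedSpace 𝕜 F] [AddCommGroup F1] [Module 𝕜 F1]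
    {S : Submodule 𝕜 F} [FiniteDimensional 𝕜 (F ⧸ S)] (hS : IsClosed (S : Set F))
    {i : F1 →ₗ[𝕜] F} (hi : DenseRange i) :
    S ⊔ LinearMap.range i = ⊤ := by
  have hclosed := Submodule.isClosed_mono_of_finiteDimensional_quotient hS
    (le_sup_left : S ≤ S ⊔ LinearMap.range i)
  refine Submodule.eq_top_iff'.mpr fun f => ?_
  exact closure_minimal (fun _ hy => Submodule.mem_sup_right hy) hclosed (hi f)

section Regularizing

variable {R E0 E1 F0 F1 : Type*} [Ring R]
  [AddCommGroup E0] [Module R E0] [AddCommGroup E1] [Module R E1]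
  [AddCommGroup F0] [Module R F0] [AddCommGroup F1] [Module R F1]
  {iE : E1 →ₗ[R] E0} {iF : F1 →ₗ[R] F0} {L : E0 →ₗ[R] F0} {L1 : E1 →ₗ[R] F1}

theorem LinearMap.map_ker_eq_ker_of_regularizing (hiF : Injective iF)
    (hrestrict : ∀ x, iF (L1 x) = L (iE x))
    (hreg : ∀ x, (∃ y, iF y = L x) → ∃ z, iE z = x) :
    (LinearMap.ker L1).map iE = LinearMap.ker L := by
  ext x
  simp only [Submodule.mem_map, LinearMap.mem_ker]
  constructor
  · rintro ⟨z, hz, rfl⟩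
    rw [← hrestrict, hz, map_zero]
  · intro hx
    obtain ⟨z, rfl⟩ := hreg x ⟨0, by rw [map_zero, hx]⟩
    exact ⟨z, hiF (by rw [hrestrict, hx, map_zero]), rfl⟩

theorem LinearMap.ker_mkQ_comp_eq_range_of_regularizing (hiF : Injective iF)
    (hrestrict : ∀ x, iF (L1 x) = L (iE x))
    (hreg : ∀ x, (∃ y, iF y = L x) → ∃ z, iE z = x) :
    LinearMap.ker ((LinearMap.range L).mkQ ∘ₗ iF) = LinearMap.range L1 := by
  ext y
  simp only [LinearMap.mem_ker, LinearMap.comp_apply, Submodule.mkQ_apply,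
    Submodule.Quotient.mk_eq_zero, LinearMap.mem_range]
  constructor
  · rintro ⟨x, hx⟩
    obtain ⟨z, rfl⟩ := hreg x ⟨y, hx.symm⟩
    exact ⟨z, hiF (by rw [hrestrict, hx])⟩
  · rintro ⟨z, rfl⟩
    exact ⟨iE z, (hrestrict z).symm⟩

noncomputable def LinearMap.quotientRangeEquivOfRegularizing (hiF : Injective iF)
    (hrestrict : ∀ x, iF (L1 x) = L (iE x))
    (hreg : ∀ x, (∃ y, iF y = L x) → ∃ z, iE z = x)
    (hsup : LinearMap.range L ⊔ LinearMap.range iF = ⊤) :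
    (F1 ⧸ LinearMap.range L1) ≃ₗ[R] F0 ⧸ LinearMap.range L :=
  (Submodule.quotEquivOfEq _ _
    (ker_mkQ_comp_eq_range_of_regularizing hiF hrestrict hreg).symm).trans
    (((LinearMap.range L).mkQ ∘ₗ iF).quotKerEquivOfSurjective <| by
      rw [← LinearMap.range_eq_top, LinearMap.range_comp, Submodule.map_mkQ_eq_top]
      exact hsup)

end Regularizing

theorem stmt19_general
    {E0 E1 F0 F1 : Type*}
    [NormedAddCommGroup E0] [NormedSpace ℝ E0] [CompleteSpace E0]
    [NormedAddCommGroup E1] [NormedSpace ℝ E1]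
    [NormedAddCommGroup F0] [NormedSpace ℝ F0] [CompleteSpace F0]
    [NormedAddCommGroup F1] [NormedSpace ℝ F1]
    -- `E₁ ⊆ E₀` and `F₁ ⊆ F₀` as continuous (bounded) injective linear inclusions:
    (iE : E1 →L[ℝ] E0) (hiE : Function.Injective iE)
    (iF : F1 →L[ℝ] F0) (hiF : Function.Injective iF)
    -- `F₁` is dense in `F₀`:
    (hdense : DenseRange iF)
    -- `L : E₀ → F₀` bounded linear, and its restriction `L₁ : E₁ → F₁` bounded linear:
    (L : E0 →L[ℝ] F0) (L1 : E1 →L[ℝ] F1)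
    (hrestrict : ∀ x : E1, iF (L1 x) = L (iE x))
    -- `L` is Fredholm:
    (hker : FiniteDimensional ℝ (LinearMap.ker (L : E0 →ₗ[ℝ] F0)))
    (hcoker : FiniteDimensional ℝ (F0 ⧸ LinearMap.range (L : E0 →ₗ[ℝ] F0)))
    -- `L` is regularizing: `x ∈ E₀` and `L x ∈ F₁` imply `x ∈ E₁`:
    (hreg : ∀ x : E0, (∃ y : F1, iF y = L x) → ∃ z : E1, iE z = x) :
    -- `L₁` is Fredholm with the same kernel, a cokernel of the same dimension, and
    -- the same index:
    FiniteDimensional ℝ (LinearMap.ker (L1 : E1 →ₗ[ℝ] F1)) ∧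
    Submodule.map (iE : E1 →ₗ[ℝ] E0) (LinearMap.ker (L1 : E1 →ₗ[ℝ] F1)) = LinearMap.ker (L : E0 →ₗ[ℝ] F0) ∧
    FiniteDimensional ℝ (F1 ⧸ LinearMap.range (L1 : E1 →ₗ[ℝ] F1)) ∧
    Module.finrank ℝ (F1 ⧸ LinearMap.range (L1 : E1 →ₗ[ℝ] F1)) = Module.finrank ℝ (F0 ⧸ LinearMap.range (L : E0 →ₗ[ℝ] F0)) ∧
    (Module.finrank ℝ (LinearMap.ker (L1 : E1 →ₗ[ℝ] F1)) : ℤ) - Module.finrank ℝ (F1 ⧸ LinearMap.range (L1 : E1 →ₗ[ℝ] F1))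
      = (Module.finrank ℝ (LinearMap.ker (L : E0 →ₗ[ℝ] F0)) : ℤ) - Module.finrank ℝ (F0 ⧸ LinearMap.range (L : E0 →ₗ[ℝ] F0)) := by
  have hkerEq := LinearMap.map_ker_eq_ker_of_regularizing
    (iE := (iE : E1 →ₗ[ℝ] E0)) (L := (L : E0 →ₗ[ℝ] F0)) hiF hrestrict hreg
  let eker : LinearMap.ker (L1 : E1 →ₗ[ℝ] F1) ≃ₗ[ℝ] LinearMap.ker (L : E0 →ₗ[ℝ] F0) :=
    (Submodule.equivMapOfInjective _ hiE _).trans (LinearEquiv.ofEq _ _ hkerEq)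
  let ecoker := LinearMap.quotientRangeEquivOfRegularizing
    (iE := (iE : E1 →ₗ[ℝ] E0)) (L := (L : E0 →ₗ[ℝ] F0)) hiF hrestrict hreg
    (Submodule.sup_range_eq_top_of_denseRange L.isClosed_range_of_finiteDimensional_quotient hdense)
  exact ⟨eker.symm.finiteDimensional, hkerEq, ecoker.symm.finiteDimensional, ecoker.finrank_eq,
    by rw [eker.finrank_eq, ecoker.finrank_eq]⟩

theorem stmt19
    {E0 E1 F0 F1 : Type*}
    [NormedAddCommGroup E0] [NormedSpace ℝ E0] [CompleteSpace E0]
    [NormedAddCommGroup E1] [NormedSpace ℝ E1] [CompleteSpace E1]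
    [NormedAddCommGroup F0] [NormedSpace ℝ F0] [CompleteSpace F0]
    [NormedAddCommGroup F1] [NormedSpace ℝ F1] [CompleteSpace F1]
    -- `E₁ ⊆ E₀` and `F₁ ⊆ F₀` as continuous (bounded) injective linear inclusions:
    (iE : E1 →L[ℝ] E0) (hiE : Function.Injective iE)
    (iF : F1 →L[ℝ] F0) (hiF : Function.Injective iF)
    -- `F₁` is dense in `F₀`:
    (hdense : DenseRange iF)
    -- `L : E₀ → F₀` bounded linear, and its restriction `L₁ : E₁ → F₁` bounded linear:
    (L : E0 →L[ℝ] F0) (L1 : E1 →L[ℝ] F1)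
    (hrestrict : ∀ x : E1, iF (L1 x) = L (iE x))
    -- `L` is Fredholm:
    (hker : FiniteDimensional ℝ (LinearMap.ker (L : E0 →ₗ[ℝ] F0)))
    (hcoker : FiniteDimensional ℝ (F0 ⧸ LinearMap.range (L : E0 →ₗ[ℝ] F0)))
    -- `L` is regularizing: `x ∈ E₀` and `L x ∈ F₁` imply `x ∈ E₁`:
    (hreg : ∀ x : E0, (∃ y : F1, iF y = L x) → ∃ z : E1, iE z = x) :
    -- `L₁` is Fredholm with the same kernel, a cokernel of the same dimension, and
    -- the same index:
    FiniteDimensional ℝ (LinearMap.ker (L1 : E1 →ₗ[ℝ] F1)) ∧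
    Submodule.map (iE : E1 →ₗ[ℝ] E0) (LinearMap.ker (L1 : E1 →ₗ[ℝ] F1)) = LinearMap.ker (L : E0 →ₗ[ℝ] F0) ∧
    FiniteDimensional ℝ (F1 ⧸ LinearMap.range (L1 : E1 →ₗ[ℝ] F1)) ∧
    Module.finrank ℝ (F1 ⧸ LinearMap.range (L1 : E1 →ₗ[ℝ] F1)) = Module.finrank ℝ (F0 ⧸ LinearMap.range (L : E0 →ₗ[ℝ] F0)) ∧
    (Module.finrank ℝ (LinearMap.ker (L1 : E1 →ₗ[ℝ] F1)) : ℤ) - Module.finrank ℝ (F1 ⧸ LinearMap.range (L1 : E1 →ₗ[ℝ] F1))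
      = (Module.finrank ℝ (LinearMap.ker (L : E0 →ₗ[ℝ] F0)) : ℤ) - Module.finrank ℝ (F0 ⧸ LinearMap.range (L : E0 →ₗ[ℝ] F0)) :=
  stmt19_general iE hiE iF hiF hdense L L1 hrestrict hker hcoker hreg
end
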